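/- arXiv:2410.04714 — 2 statements merged into one kernel-verified Lean document; each statement's English description precedes it below -/
import Mathlib

section
/- Every elementary lattice triangle with base of lattice length n and height n has normalized area n², and the cone over an elementary triangle with base AB of lattice length n and apex O at lattice distance n corresponds to the quotient singularity ℂ²/(ℤ/n²ℤ) with weights (1, an-1) for some a coprime to n; in particular the index of the sublattice of ℤ² generated by the primitive generators of the two rays OA, OB of the cone is n². -/
/-!
Since `B - O = (A - O) + n • u`, the determinant of the two edges at `O` is `n • det(A - O, u)`,
of absolute value `n · n`. The index of the subgroup of `ℤ²` generated by two vectors is the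
absolute value of their determinant: for independent vectors this is the lattice-index formula
for a basis, and for dependent ones both sides vanish.
-/

/-- The determinant `det(v, w) = v₁w₂ - v₂w₁` of two vectors in `ℤ²`. -/
def det2 (v w : ℤ × ℤ) : ℤ := v.1 * w.2 - v.2 * w.1

open Module

lemma det2_zsmul_add_zsmul (a b c d : ℤ) (v w : ℤ × ℤ) :
    det2 (a • v + b • w) (c • v + d • w) = (a * d - b * c) * det2 v w := by
  simp only [det2, Prod.fst_add, Prod.snd_add, Prod.smul_fst, Prod.smul_snd, smul_eq_mul]
  ring

lemma det2_add_zsmul_right (v u : ℤ × ℤ) (c : ℤ) : det2 v (v + c • u) = c * det2 v u := by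
  simp only [det2, Prod.fst_add, Prod.snd_add, Prod.smul_fst, Prod.smul_snd, smul_eq_mul]
  ring

lemma Module.Basis.det_finTwoProd (v w : ℤ × ℤ) :
    (Basis.finTwoProd ℤ).det ![v, w] = det2 v w := by
  rw [Basis.det_apply, Matrix.det_fin_two]
  simp [Basis.toMatrix_apply, det2, mul_comm]

lemma linearIndependent_pair_of_det2_ne_zero {v w : ℤ × ℤ} (h : det2 v w ≠ 0) :
    LinearIndependent ℤ ![v, w] := by
  refine LinearIndependent.pair_iff.mpr fun s t hst => ?_
  obtain ⟨h1, h2⟩ := Prod.ext_iff.mp hst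
  simp only [Prod.fst_add, Prod.snd_add, Prod.smul_fst, Prod.smul_snd, smul_eq_mul,
    Prod.fst_zero, Prod.snd_zero] at h1 h2
  have hs : s * det2 v w = 0 := by unfold det2; linear_combination w.2 * h1 - w.1 * h2
  have ht : t * det2 v w = 0 := by unfold det2; linear_combination v.1 * h2 - v.2 * h1
  exact ⟨(mul_eq_zero.mp hs).resolve_right h, (mul_eq_zero.mp ht).resolve_right h⟩

lemma index_closure_pair_of_det2_ne_zero {v w : ℤ × ℤ} (h : det2 v w ≠ 0) :
    (AddSubgroup.closure {v, w} : AddSubgroup (ℤ × ℤ)).index = (det2 v w).natAbs := by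
  have hli := linearIndependent_pair_of_det2_ne_zero h
  have hspan : (AddSubgroup.closure {v, w} : AddSubgroup (ℤ × ℤ)) =
      (Submodule.span ℤ (Set.range ![v, w])).toAddSubgroup := by
    rw [Submodule.span_int_eq_addSubgroupClosure, Matrix.range_cons, Matrix.range_cons,
      Matrix.range_empty, Set.union_empty, Set.singleton_union]
  have hbasis : (fun i ↦ ((Basis.span hli i : Submodule.span ℤ (Set.range ![v, w])) : ℤ × ℤ)) =
      ![v, w] :=
    funext fun i ↦ congrArg Subtype.val (Basis.span_apply hli i)
  rw [hspan, AddSubgroup.index_eq_natAbs_det (Basis.finTwoProd ℤ) _ (Basis.span hli), hbasis,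
    Basis.det_finTwoProd]

lemma index_closure_pair_of_det2_eq_zero {v w : ℤ × ℤ} (h : det2 v w = 0) :
    (AddSubgroup.closure {v, w} : AddSubgroup (ℤ × ℤ)).index = 0 := by
  set k := (AddSubgroup.closure {v, w} : AddSubgroup (ℤ × ℤ)).index
  -- `k • (1, 0)` and `k • (0, 1)` lie in the subgroup, so `k² = det2 (k • (1, 0)) (k • (0, 1))`
  -- is a multiple of `det2 v w = 0`.
  obtain ⟨a, b, hab⟩ := AddSubgroup.mem_closure_pair.mp
    ((AddSubgroup.closure {v, w}).nsmul_index_mem ((1, 0) : ℤ × ℤ))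
  obtain ⟨c, d, hcd⟩ := AddSubgroup.mem_closure_pair.mp
    ((AddSubgroup.closure {v, w}).nsmul_index_mem ((0, 1) : ℤ × ℤ))
  have hk : (k : ℤ) ^ 2 = 0 := by
    have := det2_zsmul_add_zsmul a b c d v w
    rw [hab, hcd, h, mul_zero] at this
    simpa [det2, sq] using this
  exact_mod_cast (pow_eq_zero_iff two_ne_zero).mp hk

theorem index_closure_pair (v w : ℤ × ℤ) :
    (AddSubgroup.closure {v, w} : AddSubgroup (ℤ × ℤ)).index = (det2 v w).natAbs := by
  by_cases h : det2 v w = 0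
  · rw [index_closure_pair_of_det2_eq_zero h, h, Int.natAbs_zero]
  · exact index_closure_pair_of_det2_ne_zero h

theorem elementary_triangle_area_and_index_general (O A B u : ℤ × ℤ) (n : ℕ)
    (hAB : B - A = (n : ℤ) • u)
    (hheight : (det2 (A - O) u).natAbs = n) :
    (det2 (A - O) (B - O)).natAbs = n ^ 2 ∧
    (AddSubgroup.closure {A - O, B - O} : AddSubgroup (ℤ × ℤ)).index = n ^ 2 := by
  have hB : B - O = (A - O) + (n : ℤ) • u := by rw [← hAB]; abel
  have harea : (det2 (A - O) (B - O)).natAbs = n ^ 2 := by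
    rw [hB, det2_add_zsmul_right, Int.natAbs_mul, Int.natAbs_natCast, hheight, sq]
  exact ⟨harea, (index_closure_pair _ _).trans harea⟩

/-- An elementary lattice triangle `OAB` with base `AB` of lattice length `n`
and apex `O` at lattice distance `n` from `AB`, whose other two edges `OA`,
`OB` have lattice length `1`, has normalized area `n²`; moreover the index of
the sublattice of `ℤ²` generated by the primitive generators `A - O`, `B - O`
of the two rays of the cone over the triangle is `n²`. -/
theorem elementary_triangle_area_and_index (O A B u : ℤ × ℤ) (n : ℕ)
    (hu : Int.gcd u.1 u.2 = 1)
    (hAB : B - A = (n : ℤ) • u)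
    (hheight : (det2 (A - O) u).natAbs = n)
    (hOA : Int.gcd (A - O).1 (A - O).2 = 1)
    (hOB : Int.gcd (B - O).1 (B - O).2 = 1) :
    (det2 (A - O) (B - O)).natAbs = n ^ 2 ∧
    (AddSubgroup.closure {A - O, B - O} : AddSubgroup (ℤ × ℤ)).index = n ^ 2 :=
  elementary_triangle_area_and_index_general O A B u n hAB hheight
end

section
/- In an elementary lattice triangle OAB where AB has lattice length n and O is at lattice height n from AB, and OA, OB have lattice length 1, we have |det(A - O, B - O)| = n². -/
/-- In an elementary lattice triangle `OAB` where `AB` has lattice length `n`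
(`B - A = n • u` with `u` primitive), `O` is at lattice height `n` from `AB`,
and the edges `OA`, `OB` have lattice length `1` (i.e. `A - O`, `B - O` are
primitive), one has `|det(A - O, B - O)| = n²`. -/
theorem elementary_triangle_det (O A B u : ℤ × ℤ) (n : ℕ)
    (hu : Int.gcd u.1 u.2 = 1)
    (hAB : B - A = (n : ℤ) • u)
    (hheight : (det2 (A - O) u).natAbs = n)
    (hOA : Int.gcd (A - O).1 (A - O).2 = 1)
    (hOB : Int.gcd (B - O).1 (B - O).2 = 1) :
    (det2 (A - O) (B - O)).natAbs = n ^ 2 := by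
  have h1 : (B - A).1 = (n : ℤ) * u.1 := by rw [hAB]; rfl
  have h2 : (B - A).2 = (n : ℤ) * u.2 := by rw [hAB]; rfl
  have key : det2 (A - O) (B - O) = (n : ℤ) * det2 (A - O) u := by
    simp only [det2, Prod.fst_sub, Prod.snd_sub] at *
    have e1 : B.1 = A.1 + (n : ℤ) * u.1 := by linarith
    have e2 : B.2 = A.2 + (n : ℤ) * u.2 := by linarith
    rw [e1, e2]; ring
  rw [key, Int.natAbs_mul, Int.natAbs_natCast, hheight, sq]
end
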